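/- Let ℓ ≥ 2 and let G_1,...,G_ℓ be equitable Hamiltonian-laceable bipartite graphs with the same number of vertices (each with at least 2 vertices), and let G be a bipartite weld of G_1,...,G_ℓ. Then G is Hamiltonian-laceable. -/

import Mathlib

open Finset

/-- A paired `k`-PDPC of `G` with prescribed endpoints `s i`, `t i`. -/
def IsPDPC {V : Type} [Fintype V] (G : SimpleGraph V) {k : ℕ} (s t : Fin k → V) : Prop :=
  ∃ P : (i : Fin k) → G.Walk (s i) (t i),
    (∀ i, (P i).IsPath) ∧
    (∀ i j, i ≠ j → ∀ v, v ∈ (P i).support → v ∉ (P j).support) ∧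
    (∀ v : V, ∃ i, v ∈ (P i).support)

/-- `V1, V2` form a bipartition of `G` into partite sets. -/
def IsBipartition {V : Type} (G : SimpleGraph V) (V1 V2 : Finset V) : Prop :=
  (∀ v, v ∈ V1 ∨ v ∈ V2) ∧ (∀ v, ¬(v ∈ V1 ∧ v ∈ V2)) ∧
  (∀ ⦃u v⦄, G.Adj u v → (u ∈ V1 ∧ v ∈ V2) ∨ (u ∈ V2 ∧ v ∈ V1))

/-- `G` on `Fin ℓ × W` is a weld of the graphs `Gs i`: each layer `i` is a copy of `Gs i`
and between any two distinct layers the edges of `G` form a perfect matching. -/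
def IsWeld {ℓ : ℕ} {W : Type} (G : SimpleGraph (Fin ℓ × W)) (Gs : Fin ℓ → SimpleGraph W) : Prop :=
  (∀ i u v, G.Adj (i, u) (i, v) ↔ (Gs i).Adj u v) ∧
  (∀ i j, i ≠ j → ∃ f : W ≃ W, ∀ u v, G.Adj (i, u) (j, v) ↔ v = f u)

/-- `p` is a Hamiltonian path. -/
def IsHamPath {V : Type} {G : SimpleGraph V} {u v : V} (p : G.Walk u v) : Prop :=
  p.IsPath ∧ ∀ w : V, w ∈ p.support

/-- `G` is Hamiltonian-connected. -/
def HamConnected {V : Type} (G : SimpleGraph V) : Prop :=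
  ∀ u v : V, u ≠ v → ∃ p : G.Walk u v, IsHamPath p

/-- `G` is Hamiltonian-laceable with partite sets `V1, V2`. -/
def HamLaceableOn {V : Type} (G : SimpleGraph V) (V1 V2 : Finset V) : Prop :=
  IsBipartition G V1 V2 ∧ ∀ u ∈ V1, ∀ v ∈ V2, ∃ p : G.Walk u v, IsHamPath p

/-- `G` is Hamiltonian-laceable. -/
def HamLaceable {V : Type} (G : SimpleGraph V) : Prop :=
  ∃ V1 V2 : Finset V, HamLaceableOn G V1 V2

/-! A bipartition of `G` restricts to a bipartition of every layer. An equitable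
Hamiltonian-laceable graph on at least two vertices is connected, so this restriction agrees
with the layer's own bipartition up to swapping the sides: every layer is Hamiltonian-laceable
with respect to the sides of `G`.

Between two vertices of different layers, Hamiltonian paths of all layers, taken one after the
other, are chained by matching edges; the bipartition makes every matching edge leave a layer on
one side and enter the next layer on the other. For two vertices `u`, `v` of the same layer, take
a Hamiltonian path `u, w, …, v` of that layer and replace its first edge by a detour from `u`
through all the other layers back to `w`. -/

namespace IsBipartition

variable {V V' : Type} {H : SimpleGraph V} {G : SimpleGraph V'} {A B : Finset V}
  {X Y : Finset V'}

lemma symm (h : IsBipartition G X Y) : IsBipartition G Y X :=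
  ⟨fun v => (h.1 v).symm, fun v hv => h.2.1 v hv.symm, fun _ _ hadj => (h.2.2 hadj).symm⟩

lemma mem_right_iff (h : IsBipartition G X Y) {v : V'} : v ∈ Y ↔ v ∉ X :=
  ⟨fun hY hX => h.2.1 v ⟨hX, hY⟩, (h.1 v).resolve_left⟩

lemma mem_right_of_adj (h : IsBipartition G X Y) {u v : V'} (hadj : G.Adj u v) (hu : u ∈ X) :
    v ∈ Y := by
  rcases h.2.2 hadj with ⟨-, hv⟩ | ⟨hu', -⟩
  · exact hv
  · exact absurd hu (h.mem_right_iff.1 hu')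

lemma mem_iff_mem_iff_even_length (h : IsBipartition G X Y) {u v : V'} (p : G.Walk u v) :
    (u ∈ X ↔ v ∈ X) ↔ Even p.length := by
  induction p with
  | nil => simp
  | @cons u w v hadj q ih =>
    have hflip : u ∈ X ↔ w ∉ X := by
      rcases h.2.2 hadj with ⟨hu, hw⟩ | ⟨hu, hw⟩
      · exact iff_of_true hu (h.mem_right_iff.1 hw)
      · exact iff_of_false (h.mem_right_iff.1 hu) (not_not.2 hw)
    rw [SimpleGraph.Walk.length_cons, Nat.even_add_one, ← ih]
    tauto

/-- Both sides say that the walks from `a` to `b` have even length. -/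
lemma mem_iff_mem_iff_of_hom (hH : IsBipartition H A B) (hG : IsBipartition G X Y)
    (hconn : H.Preconnected) (f : H →g G) (a b : V) :
    (a ∈ A ↔ b ∈ A) ↔ (f a ∈ X ↔ f b ∈ X) := by
  obtain ⟨p⟩ := hconn a b
  rw [hH.mem_iff_mem_iff_even_length p, hG.mem_iff_mem_iff_even_length (p.map f),
    SimpleGraph.Walk.length_map]

lemma exists_mem_of_hom (hH : IsBipartition H A B) (hG : IsBipartition G X Y)
    (hconn : H.Preconnected) (f : H →g G) (hA : A.Nonempty) (hB : B.Nonempty) :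
    (∃ x, f x ∈ X) ∧ ∃ y, f y ∈ Y := by
  obtain ⟨a, ha⟩ := hA
  obtain ⟨b, hb⟩ := hB
  have hsplit : ¬(f a ∈ X ↔ f b ∈ X) := by
    rw [← hH.mem_iff_mem_iff_of_hom hG hconn f]
    exact fun h => hH.mem_right_iff.1 hb (h.1 ha)
  by_cases hfa : f a ∈ X
  · exact ⟨⟨a, hfa⟩, b, hG.mem_right_iff.2 fun hfb => hsplit (iff_of_true hfa hfb)⟩
  · exact ⟨⟨b, by tauto⟩, a, hG.mem_right_iff.2 hfa⟩

lemma card_add_card [Fintype V] (h : IsBipartition H A B) : #A + #B = Fintype.card V := by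
  classical
  rw [← card_union_of_disjoint (disjoint_left.2 fun v hA hB => h.2.1 v ⟨hA, hB⟩),
    ← card_univ]
  congr
  exact eq_univ_of_forall fun v => mem_union.2 (h.1 v)

lemma nonempty_of_card_eq [Fintype V] (h : IsBipartition H A B) (hcard : #A = #B)
    (hV : 0 < Fintype.card V) : A.Nonempty ∧ B.Nonempty := by
  have := h.card_add_card
  exact ⟨card_pos.1 (by omega), card_pos.1 (by omega)⟩

end IsBipartition

lemma IsHamPath.reverse {V : Type} {G : SimpleGraph V} {u v : V} {p : G.Walk u v}
    (h : IsHamPath p) : IsHamPath p.reverse :=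
  ⟨h.1.reverse, fun w => by rw [SimpleGraph.Walk.support_reverse, List.mem_reverse]; exact h.2 w⟩

namespace HamLaceableOn

variable {V V' : Type} {H : SimpleGraph V} {G : SimpleGraph V'} {A B : Finset V}
  {X Y : Finset V'}

lemma preconnected (hl : HamLaceableOn H A B) (hA : A.Nonempty) (hB : B.Nonempty) :
    H.Preconnected := by
  obtain ⟨a, ha⟩ := hA
  obtain ⟨b, hb⟩ := hB
  have hreach : ∀ v, H.Reachable a v := by
    intro v
    rcases hl.1.1 v with hv | hv
    · obtain ⟨p, -⟩ := hl.2 a ha b hb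
      obtain ⟨q, -⟩ := hl.2 v hv b hb
      exact ⟨p.append q.reverse⟩
    · obtain ⟨p, -⟩ := hl.2 a ha v hv
      exact ⟨p⟩
  exact fun u v => (hreach u).symm.trans (hreach v)

lemma exists_isHamPath_of_hom (hl : HamLaceableOn H A B) (hconn : H.Preconnected)
    (hG : IsBipartition G X Y) (f : H →g G) {a b : V} (ha : f a ∈ X) (hb : f b ∈ Y) :
    ∃ p : H.Walk a b, IsHamPath p := by
  have hsplit : ¬(a ∈ A ↔ b ∈ A) := by
    rw [hl.1.mem_iff_mem_iff_of_hom hG hconn f]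
    exact fun h => hG.mem_right_iff.1 hb (h.1 ha)
  by_cases haA : a ∈ A
  · exact hl.2 a haA b (hl.1.mem_right_iff.2 fun hbA => hsplit (iff_of_true haA hbA))
  · obtain ⟨p, hp⟩ := hl.2 b (by tauto) a (hl.1.mem_right_iff.2 haA)
    exact ⟨p.reverse, hp.reverse⟩

end HamLaceableOn

namespace SimpleGraph.Walk

variable {V : Type} {G : SimpleGraph V} {u v w x : V}

lemma IsPath.append_cons {p : G.Walk u v} {q : G.Walk w x} (hp : p.IsPath) (hq : q.IsPath)
    (h : G.Adj v w) (hdisj : p.support.Disjoint q.support) : (p.append (cons h q)).IsPath := by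
  rw [isPath_def, support_append, support_cons, List.tail_cons, List.nodup_append']
  exact ⟨hp.support_nodup, hq.support_nodup, hdisj⟩

lemma mem_support_append_cons_iff {p : G.Walk u v} {q : G.Walk w x} (h : G.Adj v w) {y : V} :
    y ∈ (p.append (cons h q)).support ↔ y ∈ p.support ∨ y ∈ q.support := by
  rw [support_append, support_cons, List.tail_cons, List.mem_append]

end SimpleGraph.Walk

section Weld

open SimpleGraph.Walk

variable {ℓ : ℕ} {W : Type} {Gs : Fin ℓ → SimpleGraph W} {G : SimpleGraph (Fin ℓ × W)}
  {X Y : Finset (Fin ℓ × W)}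

def LayerwiseLaceable (Gs : Fin ℓ → SimpleGraph W) (X Y : Finset (Fin ℓ × W)) : Prop :=
  ∀ i a b, (i, a) ∈ X → (i, b) ∈ Y → ∃ p : (Gs i).Walk a b, IsHamPath p

lemma LayerwiseLaceable.symm (h : LayerwiseLaceable Gs X Y) : LayerwiseLaceable Gs Y X :=
  fun i a b ha hb =>
    let ⟨p, hp⟩ := h i b a hb ha
    ⟨p.reverse, hp.reverse⟩

namespace IsWeld

abbrev layer (hweld : IsWeld G Gs) (k : Fin ℓ) : Gs k →g G where
  toFun w := (k, w)
  map_rel' h := (hweld.1 k _ _).2 h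

lemma layer_injective (hweld : IsWeld G Gs) (k : Fin ℓ) : Function.Injective (hweld.layer k) :=
  fun _ _ h => (Prod.ext_iff.1 h).2

lemma mem_support_map_layer (hweld : IsWeld G Gs) {k : Fin ℓ} {a b : W} (p : (Gs k).Walk a b)
    (q : Fin ℓ × W) : q ∈ (p.map (hweld.layer k)).support ↔ q.1 = k ∧ q.2 ∈ p.support := by
  rw [support_map, List.mem_map]
  constructor
  · rintro ⟨w, hw, rfl⟩
    exact ⟨rfl, hw⟩
  · rintro ⟨rfl, hq⟩
    exact ⟨q.2, hq, rfl⟩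

lemma exists_adj (hweld : IsWeld G Gs) {i j : Fin ℓ} (hij : i ≠ j) (u : W) :
    ∃ v, G.Adj (i, u) (j, v) :=
  let ⟨f, hf⟩ := hweld.2 i j hij
  ⟨f u, (hf u (f u)).2 rfl⟩

lemma exists_isPath_through_layers (hweld : IsWeld G Gs) (hbp : IsBipartition G X Y)
    (hlay : LayerwiseLaceable Gs X Y) (hY : ∀ i, ∃ b, (i, b) ∈ Y) :
    ∀ (L : List (Fin ℓ)) (k j : Fin ℓ) (s t : W), (k :: L).Nodup →
      (k :: L).getLast (List.cons_ne_nil k L) = j → (k, s) ∈ X → (j, t) ∈ Y →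
      ∃ p : G.Walk (k, s) (j, t), p.IsPath ∧ ∀ q, q ∈ p.support ↔ q.1 ∈ k :: L := by
  intro L
  induction L with
  | nil =>
    rintro k j s t - hlast hs ht
    obtain rfl : k = j := hlast
    obtain ⟨p, hp, hcover⟩ := hlay k s t hs ht
    refine ⟨p.map (hweld.layer k), hp.map (hweld.layer_injective k), fun q => ?_⟩
    rw [hweld.mem_support_map_layer, List.mem_singleton]
    exact and_iff_left (hcover q.2)
  | cons k' L ih =>
    intro k j s t hnd hlast hs ht
    have hk : k ∉ k' :: L := (List.nodup_cons.1 hnd).1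
    obtain ⟨x, hx⟩ := hY k
    obtain ⟨p, hp, hcover⟩ := hlay k s x hs hx
    obtain ⟨y, hxy⟩ := hweld.exists_adj (fun h => hk (List.mem_cons.2 (.inl h))) x
    obtain ⟨q, hq, hsupp⟩ := ih k' j y t hnd.of_cons hlast (hbp.symm.mem_right_of_adj hxy hx) ht
    refine ⟨(p.map (hweld.layer k)).append (.cons hxy q),
      (hp.map (hweld.layer_injective k)).append_cons hq hxy fun r hr hr' => ?_, fun r => ?_⟩
    · exact hk (((hweld.mem_support_map_layer p r).1 hr).1 ▸ (hsupp r).1 hr')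
    · rw [mem_support_append_cons_iff, hweld.mem_support_map_layer, hsupp,
        List.mem_cons (l := k' :: L)]
      exact or_congr_left (and_iff_left (hcover r.2))

lemma exists_isHamPath_of_ne (hweld : IsWeld G Gs) (hbp : IsBipartition G X Y)
    (hlay : LayerwiseLaceable Gs X Y) (hY : ∀ i, ∃ b, (i, b) ∈ Y) {i j : Fin ℓ} (hij : i ≠ j)
    {u v : W} (hu : (i, u) ∈ X) (hv : (j, v) ∈ Y) : ∃ p : G.Walk (i, u) (j, v), IsHamPath p := by
  classical
  set L := ((univ.erase i).erase j).toList ++ [j]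
  have hnd : (i :: L).Nodup := by
    simp +contextual [L, List.nodup_append, hij, nodup_toList]
  obtain ⟨p, hp, hsupp⟩ := hweld.exists_isPath_through_layers hbp hlay hY L i j u v hnd
    (List.getLast_append_singleton (i :: _)) hu hv
  refine ⟨p, hp, fun q => (hsupp q).2 ?_⟩
  simp only [L, List.mem_cons, List.mem_append, mem_toList, mem_erase, mem_univ]
  tauto

lemma exists_isHamPath_of_same_layer (hweld : IsWeld G Gs) (hbp : IsBipartition G X Y)
    (hlay : LayerwiseLaceable Gs X Y) (hX : ∀ i, ∃ a, (i, a) ∈ X) (hℓ : 2 ≤ ℓ) {i : Fin ℓ}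
    {u v : W} (hu : (i, u) ∈ X) (hv : (i, v) ∈ Y) : ∃ p : G.Walk (i, u) (i, v), IsHamPath p := by
  classical
  obtain ⟨p, hp, hcover⟩ := hlay i u v hu hv
  cases p with
  | nil => exact absurd hu (hbp.mem_right_iff.1 hv)
  | @cons _ w _ huw q =>
  rw [cons_isPath_iff] at hp
  have : Nontrivial (Fin ℓ) := Fin.nontrivial_iff_two_le.2 hℓ
  obtain ⟨k₀, hk₀⟩ := exists_ne i
  obtain ⟨k, L, hL⟩ := List.exists_cons_of_ne_nil
    (List.ne_nil_of_mem (mem_toList.2 (mem_erase.2 ⟨hk₀, mem_univ k₀⟩)))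
  have hmem : ∀ c, c ∈ k :: L ↔ c ≠ i := fun c => by simp [← hL]
  obtain ⟨s, hus⟩ := hweld.exists_adj ((hmem k).1 List.mem_cons_self).symm u
  obtain ⟨t, hwt⟩ :=
    hweld.exists_adj ((hmem _).1 (List.getLast_mem (List.cons_ne_nil k L))).symm w
  have hw : (i, w) ∈ Y := hbp.mem_right_of_adj ((hweld.1 i u w).2 huw) hu
  obtain ⟨D, hD, hsupp⟩ := hweld.exists_isPath_through_layers hbp.symm hlay.symm hX L k _ s t
    (hL ▸ nodup_toList _) rfl (hbp.mem_right_of_adj hus hu) (hbp.symm.mem_right_of_adj hwt hw)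
  have hD_layers : ∀ r ∈ D.support, r.1 ≠ i := fun r hr => (hmem r.1).1 ((hsupp r).1 hr)
  have hq_layer : ∀ r ∈ (q.map (hweld.layer i)).support, r.1 = i ∧ r.2 ∈ q.support :=
    fun r hr => (hweld.mem_support_map_layer q r).1 hr
  refine ⟨.cons hus (D.append (.cons hwt.symm (q.map (hweld.layer i)))), ?_, fun r => ?_⟩
  · refine (cons_isPath_iff _ _).2 ⟨hD.append_cons (hp.1.map (hweld.layer_injective i))
      hwt.symm fun r hr hr' => hD_layers r hr (hq_layer r hr').1, ?_⟩
    rw [mem_support_append_cons_iff]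
    rintro (h | h)
    · exact hD_layers _ h rfl
    · exact hp.2 (hq_layer _ h).2
  · obtain ⟨c, x⟩ := r
    rw [support_cons, List.mem_cons, mem_support_append_cons_iff, hweld.mem_support_map_layer,
      hsupp, hmem]
    by_cases hc : c = i
    · subst hc
      rcases List.mem_cons.1 (hcover x) with rfl | hx
      · exact .inl rfl
      · exact .inr (.inr ⟨rfl, hx⟩)
    · exact .inr (.inl hc)

end IsWeld

end Weld

theorem stmt10_general {ℓ : ℕ} (hℓ : 2 ≤ ℓ) {W : Type} [Fintype W]
    (hW : 2 ≤ Fintype.card W) (Gs : Fin ℓ → SimpleGraph W)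
    (hlace : ∀ i, ∃ A B : Finset W, HamLaceableOn (Gs i) A B ∧ A.card = B.card)
    (G : SimpleGraph (Fin ℓ × W)) (hweld : IsWeld G Gs)
    (hbip : ∃ V1 V2 : Finset (Fin ℓ × W), IsBipartition G V1 V2) :
    HamLaceable G := by
  obtain ⟨V1, V2, hbp⟩ := hbip
  choose A B hl hcard using hlace
  have hne : ∀ i, (A i).Nonempty ∧ (B i).Nonempty :=
    fun i => (hl i).1.nonempty_of_card_eq (hcard i) (by omega)
  have hconn : ∀ i, (Gs i).Preconnected := fun i => (hl i).preconnected (hne i).1 (hne i).2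
  have hsides : ∀ i, (∃ a, (i, a) ∈ V1) ∧ ∃ b, (i, b) ∈ V2 := fun i =>
    (hl i).1.exists_mem_of_hom hbp (hconn i) (hweld.layer i) (hne i).1 (hne i).2
  have hlay : LayerwiseLaceable Gs V1 V2 := fun i _ _ ha hb =>
    (hl i).exists_isHamPath_of_hom (hconn i) hbp (hweld.layer i) ha hb
  refine ⟨V1, V2, hbp, ?_⟩
  rintro ⟨i, u⟩ hu ⟨j, v⟩ hv
  rcases eq_or_ne i j with rfl | hij
  · exact hweld.exists_isHamPath_of_same_layer hbp hlay (fun i => (hsides i).1) hℓ hu hv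
  · exact hweld.exists_isHamPath_of_ne hbp hlay (fun i => (hsides i).2) hij hu hv

theorem stmt10 {ℓ : ℕ} (hℓ : 2 ≤ ℓ) {W : Type} [Fintype W] [DecidableEq W]
    (hW : 2 ≤ Fintype.card W) (Gs : Fin ℓ → SimpleGraph W)
    (hlace : ∀ i, ∃ A B : Finset W, HamLaceableOn (Gs i) A B ∧ A.card = B.card)
    (G : SimpleGraph (Fin ℓ × W)) (hweld : IsWeld G Gs)
    (hbip : ∃ V1 V2 : Finset (Fin ℓ × W), IsBipartition G V1 V2) :
    HamLaceable G :=
  stmt10_general hℓ hW Gs hlace G hweld hbip
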